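/- arXiv:2306.07492 — 2 statements merged into one kernel-verified Lean document; each statement's English description precedes it below -/
import Mathlib

section
/- Let (𝒲, 𝒜, ν₁) and (𝒯, ℬ, ν₂) be σ-finite measure spaces, let y : 𝒯 → ℝ be measurable, let p : 𝒲 × 𝒯 → [0, ∞) be measurable with ∫ p d(ν₁ ⊗ ν₂) = 1, and let η : 𝒲 × 𝒯 → ℝ be bounded measurable. Fix w ∈ 𝒲 with p_W(w) := ∫ p(w, t) dν₂(t) ∈ (0, ∞) and ∫ |y(t)| p(w, t) dν₂(t) < ∞, and set μ₀(w) := ∫ y(t) p(w, t) dν₂(t) / p_W(w). For |ε| < 1/sup|η| define μ_ε(w) := ∫ y(t) p(w, t)(1 + εη(w, t)) dν₂(t) / ∫ p(w, t)(1 + εη(w, t)) dν₂(t). Then ε ↦ μ_ε(w) is differentiable at ε = 0 with derivative ∫ {y(t) − μ₀(w)} η(w, t) p(w, t) dν₂(t) / p_W(w). -/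
open MeasureTheory

/-!
The perturbed density `p (1 + ε η)` enters the numerator and the denominator of the conditional
mean linearly, so `ε ↦ μ_ε(w)` is a quotient `(A + ε B) / (p_W + ε E)` of two affine functions of
`ε` (all four integrals exist because `η` is bounded). The quotient rule at `ε = 0` gives
`(B - μ₀ E) / p_W`, and `B - μ₀ E = ∫ (y - μ₀) η p`.
-/

theorem hasDerivAt_affine_div_affine {a b c d : ℝ} (hc : c ≠ 0) :
    HasDerivAt (fun ε : ℝ => (a + ε * b) / (c + ε * d)) ((b - a / c * d) / c) 0 := by
  have hnum : HasDerivAt (fun ε : ℝ => a + ε * b) b 0 := by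
    simpa using ((hasDerivAt_id (0 : ℝ)).mul_const b).const_add a
  have hden : HasDerivAt (fun ε : ℝ => c + ε * d) d 0 := by
    simpa using ((hasDerivAt_id (0 : ℝ)).mul_const d).const_add c
  refine (hnum.div hden (by simpa using hc)).congr_deriv ?_
  simp only [zero_mul, add_zero]
  field_simp

section WeightedMean

variable {α : Type*} [MeasurableSpace α] {ν : Measure α}

theorem integral_add_const_mul {u v : α → ℝ} (hu : Integrable u ν) (hv : Integrable v ν) (ε : ℝ) :
    ∫ t, (u t + ε * v t) ∂ν = ∫ t, u t ∂ν + ε * ∫ t, v t ∂ν := by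
  rw [integral_add hu (hv.const_mul ε), integral_const_mul]

theorem hasDerivAt_weighted_mean_perturbed {f p h : α → ℝ}
    (hp : Integrable p ν) (hfp : Integrable (fun t => f t * p t) ν)
    (hhp : Integrable (fun t => h t * p t) ν) (hfhp : Integrable (fun t => f t * h t * p t) ν)
    (hp_ne : ∫ t, p t ∂ν ≠ 0) :
    HasDerivAt
      (fun ε => (∫ t, f t * (p t * (1 + ε * h t)) ∂ν) / ∫ t, p t * (1 + ε * h t) ∂ν)
      ((∫ t, (f t - (∫ t, f t * p t ∂ν) / ∫ t, p t ∂ν) * h t * p t ∂ν) / ∫ t, p t ∂ν) 0 := by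
  have hnum (ε : ℝ) : ∫ t, f t * (p t * (1 + ε * h t)) ∂ν
      = ∫ t, f t * p t ∂ν + ε * ∫ t, f t * h t * p t ∂ν := by
    rw [← integral_add_const_mul hfp hfhp]
    congr 1 with t
    ring
  have hden (ε : ℝ) : ∫ t, p t * (1 + ε * h t) ∂ν = ∫ t, p t ∂ν + ε * ∫ t, h t * p t ∂ν := by
    rw [← integral_add_const_mul hp hhp]
    congr 1 with t
    ring
  have hderiv (m : ℝ) : ∫ t, (f t - m) * h t * p t ∂ν
      = ∫ t, f t * h t * p t ∂ν - m * ∫ t, h t * p t ∂ν := by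
    rw [← integral_const_mul, ← integral_sub hfhp (hhp.const_mul m)]
    congr 1 with t
    ring
  simp_rw [hnum, hden, hderiv]
  exact hasDerivAt_affine_div_affine hp_ne

end WeightedMean

theorem pathwise_derivative_conditional_mean_general
    {𝒲 𝒯 : Type*} [MeasurableSpace 𝒲] [MeasurableSpace 𝒯]
    (ν₂ : Measure 𝒯)
    (y : 𝒯 → ℝ) (hy_meas : Measurable y)
    (p : 𝒲 × 𝒯 → ℝ) (hp_nonneg : ∀ z, 0 ≤ p z)
    (C : ℝ)
    (η : 𝒲 × 𝒯 → ℝ) (hη_meas : Measurable η) (hη_bdd : ∀ z, |η z| ≤ C)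
    (w : 𝒲)
    (pW : ℝ) (hpW : pW = ∫ t, p (w, t) ∂ν₂) (hpW_pos : 0 < pW)
    (hy_int : Integrable (fun t => |y t| * p (w, t)) ν₂)
    (μ₀ : ℝ) (hμ₀ : μ₀ = (∫ t, y t * p (w, t) ∂ν₂) / pW)
    (με : ℝ → ℝ)
    (hμε : ∀ ε, με ε =
      (∫ t, y t * (p (w, t) * (1 + ε * η (w, t))) ∂ν₂) /
        (∫ t, p (w, t) * (1 + ε * η (w, t)) ∂ν₂)) :
    HasDerivAt με ((∫ t, (y t - μ₀) * η (w, t) * p (w, t) ∂ν₂) / pW) 0 := by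
  have hp : Integrable (fun t => p (w, t)) ν₂ := by
    by_contra h
    rw [hpW, integral_undef h] at hpW_pos
    exact hpW_pos.false
  have hηw : AEStronglyMeasurable (fun t => η (w, t)) ν₂ :=
    (hη_meas.comp measurable_prodMk_left).aestronglyMeasurable
  have hη_ae : ∀ᵐ t ∂ν₂, ‖η (w, t)‖ ≤ C := ae_of_all _ fun t => hη_bdd _
  have hyp : Integrable (fun t => y t * p (w, t)) ν₂ := by
    refine (integrable_norm_iff (hy_meas.aestronglyMeasurable.mul hp.1)).1 ?_
    simpa only [Pi.mul_apply, Real.norm_eq_abs, abs_mul, abs_of_nonneg (hp_nonneg _)] using hy_int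
  have hyηp : Integrable (fun t => y t * η (w, t) * p (w, t)) ν₂ := by
    simpa only [mul_left_comm, mul_assoc] using hyp.bdd_mul hηw hη_ae
  subst hpW hμ₀
  rw [show με = _ from funext hμε]
  exact hasDerivAt_weighted_mean_perturbed hp hyp (hp.bdd_mul hηw hη_ae) hyηp hpW_pos.ne'

/-- The intermediate computation in the proof of the paper's Lemma 1: the perturbed conditional
mean `μ_ε(w)` under the density `p(1 + εη)` is differentiable at `ε = 0` with derivative
`∫ (y(t) − μ₀(w)) η(w,t) p(w,t) dν₂(t) / p_W(w)`.  (The perturbed conditional mean is defined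
for all `ε`; it agrees with the intended definition for `|ε| < 1 / sup |η|`.) -/
theorem pathwise_derivative_conditional_mean
    {𝒲 𝒯 : Type*} [MeasurableSpace 𝒲] [MeasurableSpace 𝒯]
    (ν₁ : Measure 𝒲) [SigmaFinite ν₁] (ν₂ : Measure 𝒯) [SigmaFinite ν₂]
    (y : 𝒯 → ℝ) (hy_meas : Measurable y)
    (p : 𝒲 × 𝒯 → ℝ) (hp_meas : Measurable p) (hp_nonneg : ∀ z, 0 ≤ p z)
    (hp_int : ∫ z, p z ∂(ν₁.prod ν₂) = 1)
    (C : ℝ) (hC : 0 < C)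
    (η : 𝒲 × 𝒯 → ℝ) (hη_meas : Measurable η) (hη_bdd : ∀ z, |η z| ≤ C)
    (w : 𝒲)
    (pW : ℝ) (hpW : pW = ∫ t, p (w, t) ∂ν₂) (hpW_pos : 0 < pW)
    (hy_int : Integrable (fun t => |y t| * p (w, t)) ν₂)
    (μ₀ : ℝ) (hμ₀ : μ₀ = (∫ t, y t * p (w, t) ∂ν₂) / pW)
    (με : ℝ → ℝ)
    (hμε : ∀ ε, με ε =
      (∫ t, y t * (p (w, t) * (1 + ε * η (w, t))) ∂ν₂) /
        (∫ t, p (w, t) * (1 + ε * η (w, t)) ∂ν₂)) :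
    HasDerivAt με ((∫ t, (y t - μ₀) * η (w, t) * p (w, t) ∂ν₂) / pW) 0 :=
  pathwise_derivative_conditional_mean_general ν₂ y hy_meas p hp_nonneg C η hη_meas hη_bdd w pW hpW
    hpW_pos hy_int μ₀ hμ₀ με hμε
end

section
/- Let (Ω, 𝔉, P) be a probability space with a sub-σ-algebra 𝒢 ⊆ 𝔉, let Y and F be square-integrable real random variables, let μ_Y := E[Y | 𝒢] and μ_F := E[F | 𝒢], let m_Y and m_F be 𝒢-measurable square-integrable real random variables, and let β ∈ ℝ. Then E[(Y − m_Y − β F)²] + 2β E[(Y − m_Y) m_F] − E[(Y − μ_Y − β F)²] = E[(μ_Y − m_Y)²] + 2β E[(μ_Y − m_Y)(m_F − μ_F)]. -/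
/-!
Expanding the squares, the left-hand side minus the right-hand side is
`2 E[(μ_Y − m_Y)(Y − μ_Y)] − 2β E[(μ_Y − m_Y)(F − μ_F)] + 2β E[m_F (Y − μ_Y)]`.
Each of these terms pairs a `𝒢`-measurable `L²` function with a residual `f − E[f | 𝒢]`,
and such residuals are orthogonal to `L²(𝒢)`, so all three vanish.
-/

open MeasureTheory

theorem integral_mul_sub_condExp_eq_zero {Ω : Type*} {m m₀ : MeasurableSpace Ω}
    {μ : Measure Ω} [IsFiniteMeasure μ] (hm : m ≤ m₀) {g f : Ω → ℝ}
    (hg_meas : StronglyMeasurable[m] g) (hg : MemLp g 2 μ) (hf : MemLp f 2 μ) :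
    ∫ ω, g ω * (f ω - (μ[f|m]) ω) ∂μ = 0 := by
  have hgf : Integrable (fun ω => g ω * f ω) μ := hg.integrable_mul hf
  have hg_condExp : Integrable (fun ω => g ω * (μ[f|m]) ω) μ :=
    hg.integrable_mul (hf.condExp one_le_two)
  have pull_out : ∫ ω, g ω * f ω ∂μ = ∫ ω, g ω * (μ[f|m]) ω ∂μ := by
    rw [← integral_condExp hm]
    exact integral_congr_ae
      (condExp_mul_of_stronglyMeasurable_left hg_meas hgf (hf.integrable one_le_two))
  simp_rw [mul_sub]
  rw [integral_sub hgf hg_condExp, pull_out, sub_self]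

theorem second_order_remainder_eq_of_orthogonal {Ω : Type*} {m₀ : MeasurableSpace Ω}
    {μ : Measure Ω} {Y F mY mF μY μF : Ω → ℝ} (hY : MemLp Y 2 μ) (hF : MemLp F 2 μ)
    (hmY : MemLp mY 2 μ) (hmF : MemLp mF 2 μ) (hμY : MemLp μY 2 μ) (hμF : MemLp μF 2 μ)
    (β : ℝ) (hY_orth : ∫ ω, (μY ω - mY ω) * (Y ω - μY ω) ∂μ = 0)
    (hF_orth : ∫ ω, (μY ω - mY ω) * (F ω - μF ω) ∂μ = 0)
    (hmF_orth : ∫ ω, mF ω * (Y ω - μY ω) ∂μ = 0) :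
    (∫ ω, (Y ω - mY ω - β * F ω) ^ 2 ∂μ) + 2 * β * (∫ ω, (Y ω - mY ω) * mF ω ∂μ)
        - (∫ ω, (Y ω - μY ω - β * F ω) ^ 2 ∂μ)
      = (∫ ω, (μY ω - mY ω) ^ 2 ∂μ) + 2 * β * ∫ ω, (μY ω - mY ω) * (mF ω - μF ω) ∂μ := by
  have hg : MemLp (fun ω => μY ω - mY ω) 2 μ := hμY.sub hmY
  have : Integrable (fun ω => (Y ω - mY ω - β * F ω) ^ 2) μ :=
    ((hY.sub hmY).sub (hF.const_mul β)).integrable_sq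
  have : Integrable (fun ω => (Y ω - μY ω - β * F ω) ^ 2) μ :=
    ((hY.sub hμY).sub (hF.const_mul β)).integrable_sq
  have : Integrable (fun ω => (Y ω - mY ω) * mF ω) μ := (hY.sub hmY).integrable_mul hmF
  have : Integrable (fun ω => (μY ω - mY ω) ^ 2) μ := hg.integrable_sq
  have : Integrable (fun ω => (μY ω - mY ω) * (mF ω - μF ω)) μ :=
    hg.integrable_mul (hmF.sub hμF)
  have : Integrable (fun ω => (μY ω - mY ω) * (Y ω - μY ω)) μ := hg.integrable_mul (hY.sub hμY)
  have : Integrable (fun ω => (μY ω - mY ω) * (F ω - μF ω)) μ := hg.integrable_mul (hF.sub hμF)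
  have : Integrable (fun ω => mF ω * (Y ω - μY ω)) μ := hmF.integrable_mul (hY.sub hμY)
  calc _ = ∫ ω, ((Y ω - mY ω - β * F ω) ^ 2 + 2 * β * ((Y ω - mY ω) * mF ω)
          - (Y ω - μY ω - β * F ω) ^ 2) ∂μ := by
        rw [integral_sub, integral_add, integral_const_mul] <;> fun_prop
    _ = ∫ ω, ((μY ω - mY ω) ^ 2 + 2 * β * ((μY ω - mY ω) * (mF ω - μF ω))
          + 2 * ((μY ω - mY ω) * (Y ω - μY ω) - β * ((μY ω - mY ω) * (F ω - μF ω))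
            + β * (mF ω * (Y ω - μY ω)))) ∂μ := by
        congr 1 with ω
        ring
    _ = _ := by
      rw [integral_add, integral_add, integral_const_mul, integral_const_mul, integral_add,
        integral_sub, integral_const_mul, integral_const_mul, hY_orth, hF_orth, hmF_orth]
      · ring
      all_goals fun_prop

/-- The exact second-order remainder identity from the proof of the paper's Lemma 2:
`E[(Y − m_Y − βF)²] + 2β E[(Y − m_Y) m_F] − E[(Y − μ_Y − βF)²]
  = E[(μ_Y − m_Y)²] + 2β E[(μ_Y − m_Y)(m_F − μ_F)]`,
where `μ_Y = E[Y|𝒢]` and `μ_F = E[F|𝒢]`. -/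
theorem second_order_remainder_identity
    {Ω : Type*} {𝔉 : MeasurableSpace Ω} (P : Measure Ω) [IsProbabilityMeasure P]
    (𝒢 : MeasurableSpace Ω) (h𝒢 : 𝒢 ≤ 𝔉)
    (Y F : Ω → ℝ) (hY : MemLp Y 2 P) (hF : MemLp F 2 P)
    (mY mF : Ω → ℝ)
    (hmY_meas : StronglyMeasurable[𝒢] mY) (hmY : MemLp mY 2 P)
    (hmF_meas : StronglyMeasurable[𝒢] mF) (hmF : MemLp mF 2 P)
    (β : ℝ) :
    (∫ ω, (Y ω - mY ω - β * F ω) ^ 2 ∂P) + 2 * β * (∫ ω, (Y ω - mY ω) * mF ω ∂P)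
        - (∫ ω, (Y ω - (P[Y|𝒢]) ω - β * F ω) ^ 2 ∂P)
      = (∫ ω, ((P[Y|𝒢]) ω - mY ω) ^ 2 ∂P)
        + 2 * β * ∫ ω, ((P[Y|𝒢]) ω - mY ω) * (mF ω - (P[F|𝒢]) ω) ∂P := by
  have hg : MemLp (fun ω => (P[Y|𝒢]) ω - mY ω) 2 P := (hY.condExp one_le_two).sub hmY
  have hg_meas : StronglyMeasurable[𝒢] (fun ω => (P[Y|𝒢]) ω - mY ω) :=
    stronglyMeasurable_condExp.sub hmY_meas
  exact second_order_remainder_eq_of_orthogonal hY hF hmY hmF (hY.condExp one_le_two)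
    (hF.condExp one_le_two) β (integral_mul_sub_condExp_eq_zero h𝒢 hg_meas hg hY)
    (integral_mul_sub_condExp_eq_zero h𝒢 hg_meas hg hF)
    (integral_mul_sub_condExp_eq_zero h𝒢 hmF_meas hmF hY)
end
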